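/- The irreducible weight-n module W_{y,χ} of G is isomorphic to the induced module Ind_{G(ker π_n)}^{G}(V_{y,χ}), where G(ker π_n) = {(α,x,w) ∈ G : w ∈ ker π_n} and V_{y,χ} is the 1-dimensional G(ker π_n)-module on which (α,x,w) acts by αⁿ⟨x,y⟩χ(w). -/
import Mathlib


abbrev ThetaK1 (p : ℕ) (d : Fin p → ℕ) : Type := ∀ i : Fin p, Multiplicative (ZMod (d i))

abbrev ThetaK2 (k : Type) [Field k] (p : ℕ) (d : Fin p → ℕ) : Type := ThetaK1 p d →* kˣ

def Heis (k : Type) [Field k] (p : ℕ) (d : Fin p → ℕ) : Type :=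
  kˣ × ThetaK1 p d × ThetaK2 k p d

namespace Heis

variable {k : Type} [Field k] {p : ℕ} {d : Fin p → ℕ}

def mk (α : kˣ) (x : ThetaK1 p d) (χ : ThetaK2 k p d) : Heis k p d := (α, x, χ)

instance : Mul (Heis k p d) :=
  ⟨fun a b => (a.1 * b.1 * b.2.2 a.2.1, a.2.1 * b.2.1, a.2.2 * b.2.2)⟩

instance : One (Heis k p d) := ⟨((1 : kˣ), 1, 1)⟩

instance : Inv (Heis k p d) := ⟨fun a => (a.1⁻¹ * a.2.2 a.2.1, a.2.1⁻¹, a.2.2⁻¹)⟩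

theorem mul_def (a b : Heis k p d) :
    a * b = (a.1 * b.1 * b.2.2 a.2.1, a.2.1 * b.2.1, a.2.2 * b.2.2) := rfl

theorem one_def : (1 : Heis k p d) = ((1 : kˣ), 1, 1) := rfl

theorem inv_def (a : Heis k p d) :
    a⁻¹ = (a.1⁻¹ * a.2.2 a.2.1, a.2.1⁻¹, a.2.2⁻¹) := rfl

theorem mul_assoc' (a b c : Heis k p d) : a * b * c = a * (b * c) := by
  obtain ⟨α, x, χ⟩ := a
  obtain ⟨β, y, ψ⟩ := b
  obtain ⟨γ, z, ω⟩ := c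
  refine Prod.ext ?_ (Prod.ext ?_ ?_)
  · show α * β * ψ x * γ * (ω (x * y)) = α * (β * γ * ω y) * ((ψ * ω) x)
    simp [map_mul, MonoidHom.mul_apply, mul_assoc, mul_comm, mul_left_comm]
  · exact mul_assoc x y z
  · exact mul_assoc χ ψ ω

theorem one_mul' (a : Heis k p d) : 1 * a = a := by
  obtain ⟨α, x, χ⟩ := a
  refine Prod.ext ?_ (Prod.ext ?_ ?_)
  · show 1 * α * χ 1 = α
    simp
  · exact one_mul x
  · exact one_mul χ

theorem mul_one' (a : Heis k p d) : a * 1 = a := by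
  obtain ⟨α, x, χ⟩ := a
  refine Prod.ext ?_ (Prod.ext ?_ ?_)
  · show α * 1 * (1 : ThetaK2 k p d) x = α
    simp
  · exact mul_one x
  · exact mul_one χ

theorem inv_mul_cancel' (a : Heis k p d) : a⁻¹ * a = 1 := by
  obtain ⟨α, x, χ⟩ := a
  refine Prod.ext ?_ (Prod.ext ?_ ?_)
  · show α⁻¹ * χ x * α * χ (x⁻¹) = 1
    simp [map_inv, mul_comm, mul_left_comm]
  · exact inv_mul_cancel x
  · exact inv_mul_cancel χ

instance : Group (Heis k p d) where
  mul_assoc := mul_assoc'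
  one_mul := one_mul'
  mul_one := mul_one'
  inv_mul_cancel := inv_mul_cancel'

/-- The multiplication rule of the Heisenberg-type group. -/
theorem mk_mul (α β : kˣ) (x y : ThetaK1 p d) (χ ψ : ThetaK2 k p d) :
    mk α x χ * mk β y ψ = mk (α * β * ψ x) (x * y) (χ * ψ) := rfl

end Heis

section Reps

variable {k : Type} [Field k]

/-- A subspace stable under a representation. -/
def RepStable {G V : Type} [Group G] [AddCommGroup V] [Module k V]
    (ρ : G →* (V →ₗ[k] V)ˣ) (W : Submodule k V) : Prop :=
  ∀ (g : G), ∀ w ∈ W, (ρ g : V →ₗ[k] V) w ∈ W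

/-- Irreducibility: nonzero and no nontrivial stable subspace. -/
def RepIrred {G V : Type} [Group G] [AddCommGroup V] [Module k V]
    (ρ : G →* (V →ₗ[k] V)ˣ) : Prop :=
  (∃ v : V, v ≠ 0) ∧
  ∀ W : Submodule k V, RepStable ρ W → W = ⊥ ∨ W = ⊤

/-- Isomorphism of representations of `G`. -/
def RepIso {G V W : Type} [Group G] [AddCommGroup V] [Module k V]
    [AddCommGroup W] [Module k W]
    (ρ : G →* (V →ₗ[k] V)ˣ) (τ : G →* (W →ₗ[k] W)ˣ) : Prop :=
  ∃ e : V ≃ₗ[k] W, ∀ (g : G) (v : V), e ((ρ g : V →ₗ[k] V) v) = (τ g : W →ₗ[k] W) (e v)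

variable {p : ℕ} {d : Fin p → ℕ}

/-- A representation of the Heisenberg-type group has weight `n` if `kˣ ⊆ G` acts through the
character `α ↦ αⁿ`. -/
def IsWeight (n : ℤ) {V : Type} [AddCommGroup V] [Module k V]
    (ρ : Heis k p d →* (V →ₗ[k] V)ˣ) : Prop :=
  ∀ (α : kˣ) (v : V), (ρ (Heis.mk α 1 1) : V →ₗ[k] V) v = ((α ^ n : kˣ) : k) • v

/-- `D n = (d₁⋯d_p)/(gcd(n,d₁)⋯gcd(n,d_p))`. -/
def ThetaD (p : ℕ) (d : Fin p → ℕ) (n : ℤ) : ℕ :=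
  (∏ i, d i) / ∏ i, Int.gcd n (d i)

end Reps

section Wn

variable {k : Type} [Field k] {p : ℕ} {d : Fin p → ℕ}

/-- `π_n : K₂ → K₂`, `y ↦ yⁿ`. -/
def piN (n : ℤ) : ThetaK2 k p d →* ThetaK2 k p d where
  toFun y := y ^ n
  map_one' := by
    show (1 : ThetaK2 k p d) ^ n = 1
    exact one_zpow (α := ThetaK2 k p d) n
  map_mul' a b := by
    show (a * b) ^ n = a ^ n * b ^ n
    exact mul_zpow a b n

open scoped Classical in
/-- The standard basis vector `e_{y·z}` (indexed by `z ∈ image π_n`) of the space of functions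
on `image π_n`. -/
noncomputable def eVec (n : ℤ) (z : (piN (k := k) (p := p) (d := d) n).range) :
    ((piN (k := k) (p := p) (d := d) n).range → k) :=
  fun z' => if z' = z then 1 else 0

/-- The element `π_n w` of the image of `π_n`. -/
def rngElt (n : ℤ) (w : ThetaK2 k p d) : (piN (k := k) (p := p) (d := d) n).range :=
  ⟨piN n w, ⟨w, rfl⟩⟩

/-- The element `w · σ(z) · σ(z · π_n w)⁻¹` of `ker π_n`. -/
def kerElt (n : ℤ) (σ : (piN (k := k) (p := p) (d := d) n).range → ThetaK2 k p d)
    (hσ : ∀ z, piN n (σ z) = (z : ThetaK2 k p d))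
    (w : ThetaK2 k p d) (z : (piN (k := k) (p := p) (d := d) n).range) :
    (piN (k := k) (p := p) (d := d) n).ker :=
  ⟨w * σ z * (σ (z * rngElt n w))⁻¹, by
    have hinv : piN n ((σ (z * rngElt n w))⁻¹)
        = ((((z * rngElt n w) : (piN (k := k) (p := p) (d := d) n).range) :
            ThetaK2 k p d))⁻¹ := by
      have h := map_inv (piN (k := k) (p := p) (d := d) n) (σ (z * rngElt n w))
      rw [hσ (z * rngElt n w)] at h
      exact h
    rw [MonoidHom.mem_ker, map_mul, map_mul, hσ z, hinv]
    have hcoe : (((z * rngElt n w) : (piN (k := k) (p := p) (d := d) n).range) :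
        ThetaK2 k p d) = (z : ThetaK2 k p d) * piN n w := by simp [rngElt]
    rw [hcoe]
    exact mul_inv_eq_one.mpr (mul_comm (piN (k := k) (p := p) (d := d) n w) (z : ThetaK2 k p d))⟩

end Wn


section Aux14

variable {k : Type} [Field k] {p : ℕ} {d : Fin p → ℕ}

theorem thetaK1_pow_prod (hd0 : ∀ i, 0 < d i) (x : ThetaK1 p d) :
    x ^ (∏ i, d i) = 1 := by
  funext i
  rw [Pi.pow_apply, Pi.one_apply]
  obtain ⟨c, hc⟩ := Finset.dvd_prod_of_mem d (Finset.mem_univ i)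
  rw [hc, pow_mul]
  have h1 : x i ^ d i = 1 := by
    have h2 : Multiplicative.toAdd (x i ^ d i) = 0 := by
      rw [toAdd_pow, nsmul_eq_mul, ZMod.natCast_self, zero_mul]
    rwa [toAdd_eq_zero] at h2
  rw [h1, one_pow]

theorem finite_thetaK2 (hd0 : ∀ i, 0 < d i) : Finite (ThetaK2 k p d) := by
  classical
  haveI : ∀ i, NeZero (d i) := fun i => ⟨(hd0 i).ne'⟩
  have hNpos : 0 < ∏ i, d i := Finset.prod_pos fun i _ => hd0 i
  have hfin : {a : k | a ^ (∏ i, d i) = 1}.Finite := by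
    apply Set.Finite.subset ((Polynomial.nthRoots (∏ i, d i) (1 : k)).toFinset : Finset k).finite_toSet
    intro a ha
    simp only [Finset.coe_sort_coe, Multiset.mem_toFinset, Finset.mem_coe,
      Polynomial.mem_nthRoots hNpos]
    exact ha
  haveI : Finite {a : k // a ^ (∏ i, d i) = 1} := hfin.to_subtype
  haveI : Finite {a : kˣ // a ^ (∏ i, d i) = 1} := by
    refine Finite.of_injective (fun a => (⟨((a : kˣ) : k), by
      rw [← Units.val_pow_eq_pow_val, a.2, Units.val_one]⟩ : {a : k // a ^ (∏ i, d i) = 1})) ?_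
    intro a b hab
    exact Subtype.ext (Units.ext (Subtype.ext_iff.mp hab))
  refine Finite.of_injective
    (fun (χ : ThetaK2 k p d) => fun (x : ThetaK1 p d) =>
      (⟨χ x, by rw [← map_pow, thetaK1_pow_prod hd0, map_one]⟩ :
        {a : kˣ // a ^ (∏ i, d i) = 1})) ?_
  intro χ ψ h
  refine MonoidHom.ext fun x => ?_
  exact Units.ext (congrArg Units.val (Subtype.ext_iff.mp (congrFun h x)))

theorem thetaK2_zpow_apply (f : ThetaK2 k p d) (m : ℤ) (x : ThetaK1 p d) :
    (f ^ m) x = f x ^ m :=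
  map_zpow (MonoidHom.eval x) f m

theorem thetaK2_mul_apply (f g : ThetaK2 k p d) (x : ThetaK1 p d) :
    (f * g) x = f x * g x := rfl

theorem thetaK2_inv_apply (f : ThetaK2 k p d) (x : ThetaK1 p d) :
    (f⁻¹) x = (f x)⁻¹ := rfl

theorem thetaK2_one_apply (x : ThetaK1 p d) : (1 : ThetaK2 k p d) x = 1 := rfl

end Aux14

/-- The irreducible weight-`n` module `W_{y,χ}` of the Heisenberg-type group
`G` is isomorphic to the induced module `Ind_{G(ker π_n)}^{G}(V_{y,χ})`, where
`G(ker π_n) = {(α,x,w) ∈ G : w ∈ ker π_n}` and `V_{y,χ}` is the one-dimensional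
`G(ker π_n)`-module on which `(α,x,w)` acts by `αⁿ ⟨x,y⟩ χ(w)`.  We formalize this by the
universal property characterizing the induced module: for every `G`-module `V` and every vector
`v₀ ∈ V` spanning a copy of `V_{y,χ}` (i.e. on which `G(ker π_n)` acts by the above character),
there is a unique `G`-equivariant linear map `Ψ : W_{y,χ} → V` with `Ψ(e_{y,χ}) = v₀`. -/
theorem stmt14 {k : Type} [Field k] [IsAlgClosed k] {p : ℕ} {d : Fin p → ℕ}
    (hd0 : ∀ i, 0 < d i) (hchain : ∀ i j : Fin p, i ≤ j → d i ∣ d j)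
    (hchar : ∀ i, ¬ (ringChar k ∣ d i))
    (n : ℤ) (y : ThetaK2 k p d)
    (χ : ↥(piN (k := k) (p := p) (d := d) n).ker →* kˣ)
    (σ : ↥(piN (k := k) (p := p) (d := d) n).range → ThetaK2 k p d)
    (hσ : ∀ z, piN n (σ z) = (z : ThetaK2 k p d)) (hσ1 : σ 1 = 1)
    (ρ : Heis k p d →*
        ((↥(piN (k := k) (p := p) (d := d) n).range → k) →ₗ[k]
          (↥(piN (k := k) (p := p) (d := d) n).range → k))ˣ)
    (hρ : ∀ (α : kˣ) (x : ThetaK1 p d) (w : ThetaK2 k p d)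
        (z : ↥(piN (k := k) (p := p) (d := d) n).range),
      (ρ (Heis.mk α x w) :
          (↥(piN (k := k) (p := p) (d := d) n).range → k) →ₗ[k]
            (↥(piN (k := k) (p := p) (d := d) n).range → k)) (eVec n z) =
        ((α ^ n * (y * (z : ThetaK2 k p d)) x * χ (kerElt n σ hσ w z) : kˣ) : k) •
          eVec n (z * rngElt n w)) :
    ∀ (V : Type) [AddCommGroup V] [Module k V]
      (τ : Heis k p d →* (V →ₗ[k] V)ˣ) (v₀ : V),
      (∀ (α : kˣ) (x : ThetaK1 p d) (w : ThetaK2 k p d)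
          (hw : w ∈ (piN (k := k) (p := p) (d := d) n).ker),
        (τ (Heis.mk α x w) : V →ₗ[k] V) v₀ =
          ((α ^ n * y x * χ ⟨w, hw⟩ : kˣ) : k) • v₀) →
      ∃! Ψ : (↥(piN (k := k) (p := p) (d := d) n).range → k) →ₗ[k] V,
        (∀ (g : Heis k p d) (f : ↥(piN (k := k) (p := p) (d := d) n).range → k),
          Ψ ((ρ g : (↥(piN (k := k) (p := p) (d := d) n).range → k) →ₗ[k]
              (↥(piN (k := k) (p := p) (d := d) n).range → k)) f) =
            (τ g : V →ₗ[k] V) (Ψ f)) ∧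
        Ψ (eVec n 1) = v₀ := by
  classical
  intro V _ _ τ v₀ hv₀
  haveI : Finite (ThetaK2 k p d) := finite_thetaK2 hd0
  haveI : Fintype ↥(piN (k := k) (p := p) (d := d) n).range := Fintype.ofFinite _
  -- basic facts about the section
  have hrng : ∀ z, rngElt n (σ z) = z := fun z => Subtype.ext (hσ z)
  have hker1 : ∀ z, kerElt n σ hσ (σ z) 1 = 1 := by
    intro z
    apply Subtype.ext
    show σ z * σ 1 * (σ (1 * rngElt n (σ z)))⁻¹ = 1
    rw [hrng z, one_mul, hσ1]
    refine MonoidHom.ext fun t => ?_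
    simp [thetaK2_mul_apply, thetaK2_inv_apply, thetaK2_one_apply]
  have hρσ : ∀ z, (ρ (Heis.mk 1 1 (σ z)) :
      (↥(piN (k := k) (p := p) (d := d) n).range → k) →ₗ[k]
        (↥(piN (k := k) (p := p) (d := d) n).range → k)) (eVec n 1) = eVec n z := by
    intro z
    rw [hρ 1 1 (σ z) 1, hker1 z]
    rw [show (1 : ↥(piN (k := k) (p := p) (d := d) n).range) * rngElt n (σ z) = z by
      rw [hrng z, one_mul]]
    simp
  -- the key equivariance computation
  have key : ∀ (α : kˣ) (x : ThetaK1 p d) (w : ThetaK2 k p d)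
      (z : ↥(piN (k := k) (p := p) (d := d) n).range),
      (τ (Heis.mk α x w) : V →ₗ[k] V)
          ((τ (Heis.mk 1 1 (σ z)) : V →ₗ[k] V) v₀)
        = ((α ^ n * (y * (z : ThetaK2 k p d)) x * χ (kerElt n σ hσ w z) : kˣ) : k)
            • (τ (Heis.mk 1 1 (σ (z * rngElt n w))) : V →ₗ[k] V) v₀ := by
    intro α x w z
    have hdecomp : Heis.mk α x w * Heis.mk 1 1 (σ z)
        = Heis.mk 1 1 (σ (z * rngElt n w))
          * Heis.mk (α * (σ z) x) x ((kerElt n σ hσ w z : ThetaK2 k p d)) := by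
      rw [Heis.mk_mul, Heis.mk_mul]
      refine Prod.ext ?_ (Prod.ext ?_ ?_)
      · show α * 1 * (σ z) x = 1 * (α * (σ z) x) * (kerElt n σ hσ w z : ThetaK2 k p d) 1
        rw [map_one, mul_one, mul_one, one_mul]
      · show x * 1 = 1 * x
        rw [mul_one, one_mul]
      · show w * σ z = σ (z * rngElt n w) * (w * σ z * (σ (z * rngElt n w))⁻¹)
        refine MonoidHom.ext fun t => ?_
        simp only [thetaK2_mul_apply, thetaK2_inv_apply]
        rw [mul_comm (w t * σ z t) ((σ (z * rngElt n w) t)⁻¹), mul_inv_cancel_left]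
    have h1 : (τ (Heis.mk α x w) : V →ₗ[k] V) ((τ (Heis.mk 1 1 (σ z)) : V →ₗ[k] V) v₀)
        = (τ (Heis.mk 1 1 (σ (z * rngElt n w))) : V →ₗ[k] V)
            ((τ (Heis.mk (α * (σ z) x) x ((kerElt n σ hσ w z : ThetaK2 k p d))) :
              V →ₗ[k] V) v₀) := by
      rw [← Module.End.mul_apply, ← Units.val_mul, ← map_mul, hdecomp, map_mul,
        Units.val_mul, Module.End.mul_apply]
    have hU : ((α * (σ z) x) ^ n * y x * χ (kerElt n σ hσ w z) : kˣ)
        = α ^ n * (y * (z : ThetaK2 k p d)) x * χ (kerElt n σ hσ w z) := by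
      have hz : ((σ z) x) ^ n = (z : ThetaK2 k p d) x := by
        rw [← thetaK2_zpow_apply]
        exact DFunLike.congr_fun (hσ z) x
      rw [mul_zpow, MonoidHom.mul_apply, hz, mul_assoc (α ^ n),
        mul_comm ((z : ThetaK2 k p d) x) (y x), ← mul_assoc (α ^ n)]
    rw [h1, hv₀ (α * (σ z) x) x ((kerElt n σ hσ w z : ThetaK2 k p d))
      (kerElt n σ hσ w z).2, map_smul]
    simp only [Subtype.coe_eta]
    rw [hU]
  -- the candidate map
  let F : (↥(piN (k := k) (p := p) (d := d) n).range → k) →ₗ[k] V :=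
    { toFun := fun f => ∑ z, f z • (τ (Heis.mk 1 1 (σ z)) : V →ₗ[k] V) v₀
      map_add' := fun f g => by
        simp [add_smul, Finset.sum_add_distrib]
      map_smul' := fun c f => by
        simp [Finset.smul_sum, smul_smul] }
  have hF : ∀ f, F f = ∑ z, f z • (τ (Heis.mk 1 1 (σ z)) : V →ₗ[k] V) v₀ := fun _ => rfl
  have hFe : ∀ z, F (eVec n z) = (τ (Heis.mk 1 1 (σ z)) : V →ₗ[k] V) v₀ := by
    intro z
    rw [hF]
    rw [Finset.sum_eq_single z]
    · simp [eVec]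
    · intro b _ hb
      simp [eVec, hb]
    · intro h; exact absurd (Finset.mem_univ z) h
  have hspan : ∀ f : ↥(piN (k := k) (p := p) (d := d) n).range → k,
      f = ∑ z, f z • eVec n z := by
    intro f
    funext z'
    rw [Finset.sum_apply]
    rw [Finset.sum_eq_single z']
    · simp [eVec]
    · intro b _ hb
      simp [eVec, Ne.symm hb]
    · intro h; exact absurd (Finset.mem_univ z') h
  have hequi : ∀ (α : kˣ) (x : ThetaK1 p d) (w : ThetaK2 k p d)
      (f : ↥(piN (k := k) (p := p) (d := d) n).range → k),
      F ((ρ (Heis.mk α x w) :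
          (↥(piN (k := k) (p := p) (d := d) n).range → k) →ₗ[k]
            (↥(piN (k := k) (p := p) (d := d) n).range → k)) f)
        = (τ (Heis.mk α x w) : V →ₗ[k] V) (F f) := by
    intro α x w f
    conv_lhs => rw [hspan f]
    rw [map_sum, map_sum]
    conv_rhs => rw [hF f]
    rw [map_sum]
    refine Finset.sum_congr rfl fun z _ => ?_
    simp only [map_smul, hρ α x w z, hFe, key α x w z]
  refine ⟨F, ⟨?_, ?_⟩, ?_⟩
  · intro g f
    obtain ⟨α, x, w⟩ := g
    exact hequi α x w f
  · rw [hFe 1, hσ1]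
    rw [show Heis.mk (1 : kˣ) (1 : ThetaK1 p d) (1 : ThetaK2 k p d) = 1 from rfl,
      map_one, Units.val_one, Module.End.one_apply]
  · intro Ψ' hΨ'
    obtain ⟨h1', h2'⟩ := hΨ'
    have hΨ'e : ∀ z, Ψ' (eVec n z) = (τ (Heis.mk 1 1 (σ z)) : V →ₗ[k] V) v₀ := by
      intro z
      rw [← hρσ z, h1', h2']
    apply LinearMap.ext
    intro f
    conv_lhs => rw [hspan f]
    rw [map_sum, hF f]
    exact Finset.sum_congr rfl fun z _ => by rw [map_smul, hΨ'e z]
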